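/- Let d ≥ 3, and suppose z₁,…,z_m ∈ L·Z^d have mutual ℓ∞-distance at least L̄ = (2K+1)L, with all boxes C_{z_i} = z_i + [0,L)^d contained in a box of ℓ∞-radius ⌊C m^{1/d} L⌋. Then for every x in U = ∪_i C_{z_i}, Σ_{y∈U} g(x,y) ≤ C' · m^{2/d} · L², where g is the Green's function of simple random walk on Z^d and C' depends only on d, K, C. -/

import Mathlib

open scoped BigOperators Classical

noncomputable section

/-- The lattice `ℤ^d`. -/
abbrev Zd (d : ℕ) := Fin d → ℤ

/-- The `i`-th unit vector of `ℤ^d`. -/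
def unitVec (d : ℕ) (i : Fin d) : Zd d := fun j => if j = i then 1 else 0

/-- Number of nearest-neighbour walks `X₀ = x, X₁, …, Xₙ = y` of length `n` from `x` to `y`
with all of `X₁, …, Xₙ` lying in the set `A` (the starting point is unconstrained). -/
def walksIn (d : ℕ) (A : Set (Zd d)) : ℕ → Zd d → Zd d → ℕ
  | 0, x, y => if x = y then 1 else 0
  | n + 1, x, y =>
      if y ∈ A then
        ∑ i : Fin d, (walksIn d A n x (y + unitVec d i) + walksIn d A n x (y - unitVec d i))
      else 0

/-- The ℓ∞-box of radius `n` around `x`, containing all possible positions of a walk of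
length `n` started at `x`. -/
def rwBox (d : ℕ) (x : Zd d) (n : ℕ) : Finset (Zd d) :=
  Finset.Icc (fun i => x i - n) (fun i => x i + n)

/-- `P^x[Xₙ = y]` for simple random walk on `ℤ^d`. -/
def pwalk (d : ℕ) (n : ℕ) (x y : Zd d) : ℝ := (walksIn d Set.univ n x y : ℝ) / (2 * d) ^ n

/-- The Green's function `g(x,y) = ∑ₙ P^x[Xₙ = y]` of simple random walk on `ℤ^d`. -/
def green (d : ℕ) (x y : Zd d) : ℝ := ∑' n : ℕ, pwalk d n x y

/-- `P^x[H_K > n]`: the probability that the walk started at `x` avoids `K` at all times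
`1, …, n`. -/
def survProb (d : ℕ) (K : Set (Zd d)) (x : Zd d) (n : ℕ) : ℝ :=
  (∑ y ∈ rwBox d x n, (walksIn d Kᶜ n x y : ℝ)) / (2 * d) ^ n

/-- The equilibrium measure `e_K(x) = P^x[H_K = ∞] = inf_n P^x[H_K > n]`
(the survival probabilities being nonincreasing in `n`). -/
def equilib (d : ℕ) (K : Set (Zd d)) (x : Zd d) : ℝ := ⨅ n : ℕ, survProb d K x n

/-- The capacity `Cap(K) = ∑_{x ∈ K} e_K(x)` of a finite set `K ⊂ ℤ^d`. -/
def cap (d : ℕ) (K : Finset (Zd d)) : ℝ := ∑ x ∈ K, equilib d (↑K) x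

/-- The number of walks of length `n` started at `x` with `X₁, …, X_{n-1} ∈ U \ K`,
`Xₙ ∉ U` and `Xₙ ∉ K`; i.e. realizations of the event `{H_K > T_U, T_U = n}`. -/
def exitCount (d : ℕ) (K U : Set (Zd d)) (x : Zd d) : ℕ → ℕ
  | 0 => if x ∈ U then 0 else 1
  | n + 1 =>
      ∑ y ∈ rwBox d x (n + 1),
        if y ∉ U ∧ y ∉ K then
          ∑ i : Fin d,
            (walksIn d (U \ K) n x (y + unitVec d i) + walksIn d (U \ K) n x (y - unitVec d i))
        else 0

/-- The equilibrium measure of `K` relative to `U`: `e_{K,U}(x) = P^x[H_K > T_U]`. -/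
def equilibRel (d : ℕ) (K U : Set (Zd d)) (x : Zd d) : ℝ :=
  ∑' n : ℕ, (exitCount d K U x n : ℝ) / (2 * d) ^ n

/-- The capacity of `K` relative to `U`: `Cap_U(K) = ∑_{x ∈ K} e_{K,U}(x)`. -/
def capRel (d : ℕ) (U : Set (Zd d)) (K : Finset (Zd d)) : ℝ :=
  ∑ x ∈ K, equilibRel d (↑K) U x

end

/-- The ℓ∞ norm on `ℤ^d` (as a natural number). -/
def normInf (d : ℕ) (x : Zd d) : ℕ := Finset.univ.sup fun i => (x i).natAbs

/-- The box `C_z = z + [0,L)^d ∩ ℤ^d`. -/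
noncomputable def boxC (d : ℕ) (z : Zd d) (L : ℕ) : Finset (Zd d) :=
  Finset.Icc z (fun i => z i + L - 1)

/-!
All boxes lie within ℓ∞-distance `R = ⌊C m^{1/d} L⌋` of `z₀`, so `U` lies in the box of
radius `2R` around any of its points, and it suffices to show that the walk spends expected
time `O(r²)` in the box of radius `r` around its starting point. Split the Green sum at time
`(2r+1)²`: before, the probability to be in the box is at most `1`; after, it is at most
`(2r+1)^d` times the local bound `P^x[Xₙ = y] ≤ (2d)^d (n+1)^{-d/2}`, whose tail sums to
`O(r^d · r^{2-d})` because `d ≥ 3`.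

For the local bound, Cauchy–Schwarz on `p_{2n} = p_n * p_n` reduces it to return
probabilities. A closed path is encoded by the coordinates of its steps, `k_j` of them along
`e_j`, and a balanced choice of signs along each coordinate, so there are at most
`∑_c ∏_j C(k_j, k_j/2)` of them. As `C(k, k/2) ≲ 2^k / √(k+1)`, it remains to average
`∏_j (k_j+1)^{-1/2}` over the multinomial law of `(k_j)`: Cauchy–Schwarz and AM–GM reduce this
to the negative moments of the binomial law of a single `k_j`.
-/

open Finset

namespace Nat

lemma centralBinom_sq_mul_succ_le (n : ℕ) : n.centralBinom ^ 2 * (n + 1) ≤ 16 ^ n := by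
  induction n with
  | zero => simp
  | succ n ih =>
    refine Nat.le_of_mul_le_mul_left ?_ (by positivity : 0 < (n + 1) ^ 3)
    calc (n + 1) ^ 3 * ((n + 1).centralBinom ^ 2 * (n + 1 + 1))
        = ((n + 1) * (n + 1).centralBinom) ^ 2 * ((n + 2) * (n + 1)) := by ring
      _ = 4 * (2 * n + 1) ^ 2 * (n + 2) * (n.centralBinom ^ 2 * (n + 1)) := by
        rw [Nat.succ_mul_centralBinom_succ]; ring
      _ ≤ 16 * (n + 1) ^ 3 * 16 ^ n := Nat.mul_le_mul (by nlinarith) ih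
      _ = (n + 1) ^ 3 * 16 ^ (n + 1) := by ring

lemma choose_half_sq_mul_succ_le (m : ℕ) : m.choose (m / 2) ^ 2 * (m + 1) ≤ 2 * 4 ^ m := by
  obtain ⟨a, rfl | rfl⟩ := Nat.even_or_odd' m
  · rw [show 2 * a / 2 = a by omega, ← Nat.centralBinom_eq_two_mul_choose, pow_mul]
    calc a.centralBinom ^ 2 * (2 * a + 1) ≤ a.centralBinom ^ 2 * (2 * (a + 1)) := by gcongr; omega
      _ = 2 * (a.centralBinom ^ 2 * (a + 1)) := by ring
      _ ≤ 2 * (4 ^ 2) ^ a := by gcongr; exact centralBinom_sq_mul_succ_le a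
  · have hpascal : 2 * (2 * a + 1).choose a = (a + 1).centralBinom := by
      rw [Nat.centralBinom_eq_two_mul_choose, show 2 * (a + 1) = 2 * a + 1 + 1 by ring,
        Nat.choose_succ_succ, Nat.choose_symm_half]
      ring
    rw [show (2 * a + 1) / 2 = a by omega]
    have := centralBinom_sq_mul_succ_le (a + 1)
    rw [← hpascal] at this
    refine Nat.le_of_mul_le_mul_left ?_ (by norm_num : 0 < 4)
    calc 4 * ((2 * a + 1).choose a ^ 2 * (2 * a + 1 + 1))
        ≤ 2 * ((2 * (2 * a + 1).choose a) ^ 2 * (a + 1 + 1)) := by ring_nf; omega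
      _ ≤ 2 * 16 ^ (a + 1) := by gcongr
      _ = 4 * (2 * 4 ^ (2 * a + 1)) := by rw [pow_succ, pow_succ, pow_mul]; norm_num; ring

lemma choose_mul_ascFactorial (N k D : ℕ) :
    N.choose k * (N + 1).ascFactorial D = (N + D).choose (k + D) * (k + 1).ascFactorial D := by
  have h := Nat.choose_mul (n := N + D) (Nat.le_add_left D k)
  simp only [Nat.add_sub_cancel] at h
  rw [Nat.ascFactorial_eq_factorial_mul_choose, Nat.ascFactorial_eq_factorial_mul_choose,
    mul_left_comm, mul_comm (N.choose k), ← h]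
  ring

lemma sum_choose_add_mul_pow_le (N D e : ℕ) :
    ∑ k ∈ range (N + 1), (N + D).choose (k + D) * e ^ (N - k) ≤ (e + 1) ^ (N + D) := by
  set f : ℕ → ℕ := fun m => 1 ^ m * e ^ (N + D - m) * (N + D).choose m
  calc ∑ k ∈ range (N + 1), (N + D).choose (k + D) * e ^ (N - k)
      = ∑ k ∈ range (N + 1), f (D + k) := by
        refine sum_congr rfl fun k hk => ?_
        rw [mem_range] at hk
        simp only [f, add_comm D k, show N + D - (k + D) = N - k by omega, one_pow, one_mul]
        ring
    _ ≤ ∑ m ∈ range D, f m + ∑ k ∈ range (N + 1), f (D + k) := Nat.le_add_left _ _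
    _ = (e + 1) ^ (N + D) := by
        rw [← sum_range_add, add_comm e, add_pow, show D + (N + 1) = N + D + 1 by ring]
        simp only [f, Nat.cast_id]

end Nat

namespace SimpleRandomWalk

/-- Negative moments of a binomial distribution: `E[(X+1)^{-D}] ≤ (D/((N+1)p))^D` for
`X ~ Bin(N, p)` with `p = 1/(e+1)`, up to the normalization `(e+1)^N`. Comparing `(k+1)^D` with
the rising factorial `(k+1)⋯(k+D)` turns the sum into a tail of a binomial expansion. -/
lemma sum_choose_mul_pow_div_le (N D e : ℕ) (hD : 0 < D) :
    ∑ k ∈ range (N + 1), ((N.choose k * e ^ (N - k) : ℕ) : ℝ) * (((k : ℝ) + 1) ^ D)⁻¹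
      ≤ (D : ℝ) ^ D * ((e : ℝ) + 1) ^ (N + D) / ((N : ℝ) + 1) ^ D := by
  set A : ℕ → ℝ := fun n => ((n + 1).ascFactorial D : ℝ)
  have hA : ∀ n, 0 < A n := fun n => by simp only [A]; exact_mod_cast Nat.ascFactorial_pos n D
  have hA_le : ∀ k : ℕ, A k ≤ (D : ℝ) ^ D * ((k : ℝ) + 1) ^ D := by
    intro k
    rw [← mul_pow]
    calc A k ≤ ((k + D : ℕ) : ℝ) ^ D := by
          simp only [A]
          exact_mod_cast Nat.ascFactorial_le_pow_add k D
      _ ≤ ((D : ℝ) * ((k : ℝ) + 1)) ^ D := by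
        gcongr
        have : (1 : ℝ) ≤ D := by exact_mod_cast hD
        push_cast
        nlinarith [(k.cast_nonneg : (0 : ℝ) ≤ k)]
  have hA_ge : ((N : ℝ) + 1) ^ D ≤ A N := by
    simp only [A]
    exact_mod_cast Nat.pow_succ_le_ascFactorial (N + 1) D
  have hbin : ∑ k ∈ range (N + 1), (((N + D).choose (k + D) * e ^ (N - k) : ℕ) : ℝ)
      ≤ ((e : ℝ) + 1) ^ (N + D) := by
    rw [← Nat.cast_sum]
    exact_mod_cast Nat.sum_choose_add_mul_pow_le N D e
  calc _ ≤ ∑ k ∈ range (N + 1),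
          ((N.choose k * e ^ (N - k) : ℕ) : ℝ) * ((D : ℝ) ^ D / A k) := by
        refine sum_le_sum fun k _ => mul_le_mul_of_nonneg_left ?_ (Nat.cast_nonneg _)
        rw [inv_eq_one_div, div_le_div_iff₀ (by positivity) (hA k), one_mul]
        exact hA_le k
    _ = (D : ℝ) ^ D / A N *
          ∑ k ∈ range (N + 1), (((N + D).choose (k + D) * e ^ (N - k) : ℕ) : ℝ) := by
        rw [mul_sum]
        refine sum_congr rfl fun k hk => ?_
        have h : (N.choose k : ℝ) * A N = (N + D).choose (k + D) * A k := by
          simp only [A]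
          exact_mod_cast Nat.choose_mul_ascFactorial N k D
        field_simp [(hA k).ne', (hA N).ne']
        push_cast
        linear_combination (e : ℝ) ^ (N - k) * h
    _ ≤ (D : ℝ) ^ D / ((N : ℝ) + 1) ^ D * ((e : ℝ) + 1) ^ (N + D) := by
        gcongr
    _ = _ := by ring

lemma prod_le_sum_pow_div {ι : Type*} {s : Finset ι} (hs : s.Nonempty) {y : ι → ℝ}
    (hy : ∀ i ∈ s, 0 ≤ y i) : ∏ i ∈ s, y i ≤ (∑ i ∈ s, y i ^ #s) / #s := by
  have h := Real.geom_mean_le_arith_mean s (fun _ => 1) (fun i => y i ^ #s)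
    (fun _ _ => zero_le_one) (by simpa using hs.card_pos) (fun i hi => pow_nonneg (hy i hi) _)
  simp only [Real.rpow_one, sum_const, nsmul_eq_mul, mul_one, one_mul, prod_pow] at h
  rwa [Real.pow_rpow_inv_natCast (prod_nonneg hy) (by exact_mod_cast hs.card_pos.ne')] at h

def fiberCard {ι α : Type*} [Fintype ι] [DecidableEq α] (c : ι → α) (j : α) : ℕ :=
  #{t | c t = j}

lemma sum_fiberCard {ι α : Type*} [Fintype ι] [Fintype α] [DecidableEq α] (c : ι → α) :
    ∑ j, fiberCard c j = Fintype.card ι :=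
  (card_eq_sum_card_fiberwise fun _ _ => mem_univ _).symm

lemma card_fiber_eq_pow {ι α : Type*} [Fintype ι] [DecidableEq ι] [Fintype α] [DecidableEq α]
    (j : α) (S : Finset ι) :
    #{c : ι → α | ({t | c t = j} : Finset ι) = S} =
      (Fintype.card α - 1) ^ (Fintype.card ι - #S) := by
  have hpi : ({c : ι → α | ({t | c t = j} : Finset ι) = S} : Finset (ι → α)) =
      Fintype.piFinset fun t => if t ∈ S then {j} else univ.erase j := by
    ext c
    simp only [mem_filter, mem_univ, true_and, Fintype.mem_piFinset, Finset.ext_iff]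
    refine forall_congr' fun t => ?_
    split_ifs with ht <;> simp [ht]
  rw [hpi, Fintype.card_piFinset]
  simp only [apply_ite card, card_singleton, card_erase_of_mem (mem_univ j), card_univ]
  rw [prod_ite, prod_const, prod_const, one_pow, one_mul]
  rw [← card_compl, compl_eq_univ_sdiff, ← filter_notMem_eq_sdiff]

lemma sum_comp_fiberCard {ι α M : Type*} [Fintype ι] [DecidableEq ι] [Fintype α]
    [DecidableEq α] [AddCommMonoid M] (j : α) (g : ℕ → M) :
    ∑ c : ι → α, g (fiberCard c j) =
      ∑ k ∈ range (Fintype.card ι + 1),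
        ((Fintype.card ι).choose k * (Fintype.card α - 1) ^ (Fintype.card ι - k)) • g k := by
  rw [← sum_fiberwise univ (fun c : ι → α => ({t | c t = j} : Finset ι))]
  have hfiber : ∀ S : Finset ι,
      ∑ c ∈ univ with ({t | c t = j} : Finset ι) = S, g (fiberCard c j) =
        (Fintype.card α - 1) ^ (Fintype.card ι - #S) • g #S := by
    intro S
    rw [← card_fiber_eq_pow j S, ← sum_const]
    exact sum_congr rfl fun c hc => by rw [fiberCard, (mem_filter.1 hc).2]
  simp only [hfiber]
  rw [← powerset_univ,
    sum_powerset_apply_card fun k => (Fintype.card α - 1) ^ (Fintype.card ι - k) • g k,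
    card_univ]
  simp only [smul_smul]

lemma summable_add_one_rpow_neg {s : ℝ} (hs : 1 < s) :
    Summable fun n : ℕ => ((n : ℝ) + 1) ^ (-s) := by
  have h := (summable_nat_add_iff 1).2 (Real.summable_nat_rpow.2 (by linarith : -s < -1))
  simpa using h

lemma tsum_add_rpow_neg_le {s : ℝ} (hs : 1 < s) {N : ℕ} (hN : 0 < N) :
    ∑' n : ℕ, ((n : ℝ) + N + 1) ^ (-s) ≤ (N : ℝ) ^ (1 - s) / (s - 1) := by
  have hN' : (0 : ℝ) < N := by exact_mod_cast hN
  have h := AntitoneOn.tsum_comp_add_le_integral (f := fun t : ℝ => t ^ (-s)) N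
    (fun a ha b _ hab => Real.rpow_le_rpow_of_nonpos (hN'.trans_le ha) hab (by linarith))
    (integrableOn_Ioi_rpow_of_lt (by linarith) hN')
    fun t ht => Real.rpow_nonneg (hN'.trans ht).le _
  rw [integral_Ioi_rpow_of_lt (by linarith) hN'] at h
  convert h using 1
  · push_cast
    rfl
  · rw [neg_div, ← div_neg]
    ring_nf

variable {d : ℕ}

abbrev Step (d : ℕ) := Fin d × Bool

def Step.toVec (p : Step d) : Zd d := if p.2 then unitVec d p.1 else -unitVec d p.1

lemma Step.toVec_apply (p : Step d) (j : Fin d) :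
    p.toVec j = (if p = (j, true) then 1 else 0) - (if p = (j, false) then 1 else 0) := by
  obtain ⟨i, _ | _⟩ := p <;> by_cases h : i = j <;> simp [Step.toVec, unitVec, h, eq_comm]

def disp {n : ℕ} (s : Fin n → Step d) : Zd d := ∑ t, (s t).toVec

lemma disp_append {a b : ℕ} (s : Fin a → Step d) (t : Fin b → Step d) :
    disp (Fin.append s t) = disp s + disp t := by
  simp [disp, Fin.sum_univ_add]

lemma disp_apply {n : ℕ} (s : Fin n → Step d) (j : Fin d) :
    disp s j = (#{t | s t = (j, true)} : ℤ) - #{t | s t = (j, false)} := by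
  simp [disp, Finset.sum_apply, Step.toVec_apply, sum_sub_distrib, sum_boole]

variable (d) in
def pathCount (n : ℕ) (v : Zd d) : ℕ := #{s : Fin n → Step d | disp s = v}

lemma card_path (n : ℕ) : Fintype.card (Fin n → Step d) = (2 * d) ^ n := by
  simp [mul_comm]

lemma pathCount_zero (v : Zd d) : pathCount d 0 v = if v = 0 then 1 else 0 := by
  simp only [pathCount, Finset.univ_unique, filter_singleton]
  split_ifs <;> simp_all [disp, eq_comm]

lemma pathCount_add (a b : ℕ) (v : Zd d) :
    pathCount d (a + b) v = ∑ s : Fin a → Step d, pathCount d b (v - disp s) := by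
  simp only [pathCount, card_filter]
  rw [← (Fin.appendEquiv a b).sum_comp, Fintype.sum_prod_type]
  refine sum_congr rfl fun s _ => sum_congr rfl fun t _ => ?_
  rw [show Fin.appendEquiv a b (s, t) = Fin.append s t from rfl, disp_append]
  simp only [eq_sub_iff_add_eq']

lemma pathCount_add_eq_sum_image (a b : ℕ) (v : Zd d) :
    pathCount d (a + b) v =
      ∑ u ∈ univ.image (disp (n := a)), pathCount d a u * pathCount d b (v - u) := by
  rw [pathCount_add, sum_comp (fun u => pathCount d b (v - u)) disp]
  simp [pathCount]

lemma mem_image_disp_of_pathCount_ne_zero {n : ℕ} {v : Zd d} (h : pathCount d n v ≠ 0) :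
    v ∈ univ.image (disp (n := n)) := by
  obtain ⟨s, hs⟩ := card_ne_zero.1 h
  exact mem_image.2 ⟨s, mem_univ _, (mem_filter.1 hs).2⟩

lemma pathCount_neg (n : ℕ) (v : Zd d) : pathCount d n (-v) = pathCount d n v := by
  let flip : Step d ≃ Step d := Equiv.prodCongr (Equiv.refl _) Equiv.boolNot
  have hflip : ∀ s : Fin n → Step d,
      disp (Equiv.piCongrRight (fun _ => flip) s) = -disp s := by
    intro s
    simp only [disp, Equiv.piCongrRight_apply, ← sum_neg_distrib]
    refine sum_congr rfl fun t _ => ?_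
    cases h : (s t).2 <;> simp [flip, Step.toVec, h]
  simp only [pathCount, card_filter]
  rw [← (Equiv.piCongrRight fun _ : Fin n => flip).sum_comp]
  refine sum_congr rfl fun s _ => ?_
  simp only [hflip, neg_inj]

lemma sum_pathCount_le (n : ℕ) (T : Finset (Zd d)) :
    ∑ v ∈ T, pathCount d n v ≤ (2 * d) ^ n := by
  simp only [pathCount]
  rw [sum_card_fiberwise_eq_card_filter, ← card_path n]
  exact card_filter_le _ _

lemma pathCount_succ (n : ℕ) (v : Zd d) :
    pathCount d (n + 1) v =
      ∑ i, (pathCount d n (v - unitVec d i) + pathCount d n (v + unitVec d i)) := by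
  rw [add_comm n 1, pathCount_add, ← (Equiv.funUnique (Fin 1) (Step d)).symm.sum_comp,
    Fintype.sum_prod_type]
  simp [disp, Step.toVec, add_comm]

lemma walksIn_univ_eq_pathCount (n : ℕ) (x y : Zd d) :
    walksIn d Set.univ n x y = pathCount d n (y - x) := by
  induction n generalizing y with
  | zero => simp [walksIn, pathCount_zero, sub_eq_zero, eq_comm]
  | succ n ih =>
    simp only [walksIn, Set.mem_univ, if_true, ih, pathCount_succ]
    refine sum_congr rfl fun i _ => ?_
    rw [add_comm, sub_right_comm, add_sub_right_comm]

lemma pathCount_add_self_le (n : ℕ) (v : Zd d) :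
    pathCount d (n + n) v ≤ pathCount d (n + n) 0 := by
  set S := univ.image (disp (d := d) (n := n))
  set a := pathCount d n
  have hdiag : pathCount d (n + n) 0 = ∑ u ∈ S, a u ^ 2 := by
    rw [pathCount_add_eq_sum_image]
    simp [a, S, pathCount_neg, sq]
  have hrefl : ∑ u ∈ S, a (v - u) ^ 2 ≤ ∑ u ∈ S, a u ^ 2 := by
    rw [← sum_image (f := fun w => a w ^ 2) fun _ _ _ _ h => sub_right_injective h]
    exact sum_le_sum_of_ne_zero fun w _ hw =>
      mem_image_disp_of_pathCount_ne_zero (pow_ne_zero_iff two_ne_zero |>.1 hw)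
  have hcs := sum_mul_sq_le_sq_mul_sq S a fun u => a (v - u)
  rw [pathCount_add_eq_sum_image, hdiag]
  refine le_of_pow_le_pow_left₀ two_ne_zero (Nat.zero_le _) ?_
  calc _ ≤ (∑ u ∈ S, a u ^ 2) * ∑ u ∈ S, a (v - u) ^ 2 := hcs
    _ ≤ (∑ u ∈ S, a u ^ 2) ^ 2 := by rw [sq]; gcongr

lemma pathCount_one_add_le (n : ℕ) (v : Zd d) :
    pathCount d (1 + (n + n)) v ≤ 2 * d * pathCount d (n + n) 0 := by
  rw [pathCount_add]
  calc _ ≤ ∑ _s : Fin 1 → Step d, pathCount d (n + n) 0 :=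
        sum_le_sum fun _ _ => pathCount_add_self_le n _
    _ = _ := by simp [mul_comm]

lemma fiberCard_fst {n : ℕ} (s : Fin n → Step d) (j : Fin d) :
    fiberCard (fun t => (s t).1) j = #{t | s t = (j, true)} + #{t | s t = (j, false)} := by
  simp only [fiberCard, card_filter, ← sum_add_distrib]
  refine sum_congr rfl fun t _ => ?_
  obtain ⟨i, _ | _⟩ := s t <;> by_cases h : i = j <;> simp [h]

/-- A closed path is determined by its sequence of coordinates together with, for every
coordinate `j`, the set of times of its `+eⱼ` steps; that set has half the visits to `j`. -/
lemma pathCount_zero_le_sum_prod_choose (N : ℕ) :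
    pathCount d N 0 ≤
      ∑ c : Fin N → Fin d, ∏ j, (fiberCard c j).choose (fiberCard c j / 2) := by
  rw [pathCount, card_eq_sum_card_fiberwise (f := fun s t => (s t).1) (t := univ)
    fun _ _ => mem_coe.2 (mem_univ _)]
  refine sum_le_sum fun c _ => ?_
  have hcard : ∏ j, (fiberCard c j).choose (fiberCard c j / 2) =
      #(Fintype.piFinset fun j => powersetCard (fiberCard c j / 2) {t | c t = j}) := by
    simp [fiberCard]
  rw [hcard]
  refine card_le_card_of_injOn (fun s j => {t | s t = (j, true)}) ?_ ?_
  · intro s hs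
    simp only [coe_filter, mem_filter, mem_univ, true_and, Set.mem_ofPred_eq] at hs
    obtain ⟨hs0, rfl⟩ := hs
    refine Fintype.mem_piFinset.2 fun j => mem_powersetCard.2 ⟨?_, ?_⟩
    · intro t ht
      simp_all
    · show #{t | s t = (j, true)} = fiberCard (fun t => (s t).1) j / 2
      have h := disp_apply s j
      rw [hs0, Pi.zero_apply, eq_comm, sub_eq_zero] at h
      have := fiberCard_fst s j
      omega
  · intro s hs s' hs' hss'
    simp only [coe_filter, mem_filter, mem_univ, true_and, Set.mem_ofPred_eq] at hs hs'
    funext t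
    have hfst : (s t).1 = (s' t).1 := congrFun (hs.2.trans hs'.2.symm) t
    have hsnd := congrArg (t ∈ ·) (congrFun hss' (s t).1)
    simp only [mem_filter, mem_univ, true_and, eq_iff_iff] at hsnd
    refine Prod.ext hfst (Bool.eq_iff_iff.2 ?_)
    simpa [Prod.ext_iff, hfst] using hsnd

lemma sum_prod_inv_fiberCard_succ_le (hd : 0 < d) (N : ℕ) :
    ∑ c : Fin N → Fin d, ∏ j, ((fiberCard c j : ℝ) + 1)⁻¹
      ≤ (d : ℝ) ^ (N + 2 * d) / ((N : ℝ) + 1) ^ d := by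
  have hne : (univ : Finset (Fin d)).Nonempty := univ_nonempty_iff.2 ⟨⟨0, hd⟩⟩
  have hd' : ((d - 1 : ℕ) : ℝ) + 1 = d := by exact_mod_cast Nat.sub_add_cancel hd
  calc ∑ c : Fin N → Fin d, ∏ j, ((fiberCard c j : ℝ) + 1)⁻¹
      ≤ ∑ c : Fin N → Fin d, (∑ j, (((fiberCard c j : ℝ) + 1) ^ d)⁻¹) / d := by
        refine sum_le_sum fun c _ => ?_
        simpa [inv_pow] using
          prod_le_sum_pow_div (y := fun j => ((fiberCard c j : ℝ) + 1)⁻¹) hne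
            fun j _ => by positivity
    _ = (∑ j : Fin d, ∑ k ∈ range (N + 1),
          ((N.choose k * (d - 1) ^ (N - k) : ℕ) : ℝ) * (((k : ℝ) + 1) ^ d)⁻¹) / d := by
        rw [← sum_div, sum_comm]
        simp [sum_comp_fiberCard (g := fun k => (((k : ℝ) + 1) ^ d)⁻¹), nsmul_eq_mul]
    _ ≤ (∑ _j : Fin d, (d : ℝ) ^ d * d ^ (N + d) / ((N : ℝ) + 1) ^ d) / d := by
        gcongr with j
        simpa [hd'] using sum_choose_mul_pow_div_le N d (d - 1) hd
    _ = (d : ℝ) ^ (N + 2 * d) / ((N : ℝ) + 1) ^ d := by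
        have : (d : ℝ) ≠ 0 := by exact_mod_cast hd.ne'
        simp only [sum_const, card_univ, Fintype.card_fin, nsmul_eq_mul]
        field_simp
        ring

/-- Cauchy–Schwarz against the weights `∏ⱼ (kⱼ + 1)⁻¹` separates the central binomial
coefficients, each `≈ 2^k / √(k+1)`, from the negative moments of the visit counts. -/
lemma pathCount_zero_sq_mul_le (hd : 0 < d) (N : ℕ) :
    (pathCount d N 0 : ℝ) ^ 2 * ((N : ℝ) + 1) ^ d ≤
      2 ^ d * (d : ℝ) ^ (2 * d) * (2 * d) ^ (2 * N) := by
  set b : (Fin N → Fin d) → Fin d → ℝ :=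
    fun c j => (fiberCard c j).choose (fiberCard c j / 2)
  set f : (Fin N → Fin d) → ℝ := fun c => ∏ j, (b c j ^ 2 * ((fiberCard c j : ℝ) + 1))
  set w : (Fin N → Fin d) → ℝ := fun c => ∏ j, ((fiberCard c j : ℝ) + 1)⁻¹
  have hcount : (pathCount d N 0 : ℝ) ≤ ∑ c, ∏ j, b c j := by
    simp only [b]
    exact_mod_cast pathCount_zero_le_sum_prod_choose N
  have hcs : (∑ c, ∏ j, b c j) ^ 2 ≤ (∑ c, f c) * ∑ c, w c := by
    refine sum_sq_le_sum_mul_sum_of_sq_le_mul _ (fun c _ => by positivity)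
      (fun c _ => by positivity) fun c _ => le_of_eq ?_
    simp only [f, w, ← prod_pow, ← prod_mul_distrib]
    refine prod_congr rfl fun j _ => ?_
    field_simp
  have hf : ∀ c, f c ≤ 2 ^ d * 4 ^ N := by
    intro c
    calc f c ≤ ∏ j, (2 * 4 ^ fiberCard c j : ℝ) :=
          prod_le_prod (fun j _ => by positivity) fun j _ => by
            simp only [b]
            exact_mod_cast Nat.choose_half_sq_mul_succ_le (fiberCard c j)
      _ = 2 ^ d * 4 ^ N := by
          rw [prod_mul_distrib, prod_const, prod_pow_eq_pow_sum, sum_fiberCard]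
          simp
  have hfsum : ∑ c, f c ≤ (d : ℝ) ^ N * (2 ^ d * 4 ^ N) := by
    calc ∑ c, f c ≤ ∑ _c : Fin N → Fin d, (2 ^ d * 4 ^ N : ℝ) :=
          sum_le_sum fun c _ => hf c
      _ = _ := by simp
  have hw := sum_prod_inv_fiberCard_succ_le hd N
  calc (pathCount d N 0 : ℝ) ^ 2 * ((N : ℝ) + 1) ^ d
      ≤ (d : ℝ) ^ N * (2 ^ d * 4 ^ N) * ((d : ℝ) ^ (N + 2 * d) / ((N : ℝ) + 1) ^ d)
          * ((N : ℝ) + 1) ^ d := by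
        gcongr
        calc (pathCount d N 0 : ℝ) ^ 2 ≤ (∑ c, ∏ j, b c j) ^ 2 := by gcongr
          _ ≤ (∑ c, f c) * ∑ c, w c := hcs
          _ ≤ _ := by gcongr
    _ = 2 ^ d * (d : ℝ) ^ (2 * d) * (2 * d) ^ (2 * N) := by
        rw [show (4 : ℝ) ^ N = 2 ^ (2 * N) by rw [pow_mul]; norm_num]
        field_simp
        ring

lemma pathCount_sq_mul_le (hd : 0 < d) (n : ℕ) (v : Zd d) :
    (pathCount d n v : ℝ) ^ 2 * ((n : ℝ) + 1) ^ d ≤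
      (2 * d : ℝ) ^ (2 * d) * (2 * d) ^ (2 * n) := by
  obtain ⟨q, rfl | rfl⟩ := Nat.even_or_odd' n
  · have h2d : (2 : ℝ) ^ d * (d : ℝ) ^ (2 * d) ≤ (2 * d : ℝ) ^ (2 * d) := by
      rw [mul_pow, pow_mul 2]
      gcongr
      exact le_self_pow₀ (by norm_num) (by norm_num)
    rw [two_mul q]
    calc (pathCount d (q + q) v : ℝ) ^ 2 * (((q + q : ℕ) : ℝ) + 1) ^ d
        ≤ (pathCount d (q + q) 0 : ℝ) ^ 2 * (((q + q : ℕ) : ℝ) + 1) ^ d := by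
          gcongr
          exact_mod_cast pathCount_add_self_le q v
      _ ≤ 2 ^ d * (d : ℝ) ^ (2 * d) * (2 * d) ^ (2 * (q + q)) := pathCount_zero_sq_mul_le hd _
      _ ≤ _ := by gcongr
  · rw [add_comm, two_mul q]
    have hodd : (pathCount d (1 + (q + q)) v : ℝ) ≤ 2 * d * pathCount d (q + q) 0 := by
      exact_mod_cast pathCount_one_add_le q v
    have hshift :
        (((1 + (q + q) : ℕ) : ℝ) + 1) ^ d ≤ 2 ^ d * (((q + q : ℕ) : ℝ) + 1) ^ d := by
      rw [← mul_pow]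
      gcongr
      push_cast
      linarith
    calc (pathCount d (1 + (q + q)) v : ℝ) ^ 2 * (((1 + (q + q) : ℕ) : ℝ) + 1) ^ d
        ≤ (2 * d * pathCount d (q + q) 0 : ℝ) ^ 2 *
            (2 ^ d * (((q + q : ℕ) : ℝ) + 1) ^ d) := by
          gcongr
      _ = (2 * d) ^ 2 * 2 ^ d *
            ((pathCount d (q + q) 0 : ℝ) ^ 2 * (((q + q : ℕ) : ℝ) + 1) ^ d) := by
          ring
      _ ≤ (2 * d) ^ 2 * 2 ^ d * (2 ^ d * (d : ℝ) ^ (2 * d) * (2 * d) ^ (2 * (q + q))) :=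
          mul_le_mul_of_nonneg_left (pathCount_zero_sq_mul_le hd _) (by positivity)
      _ = _ := by ring

lemma pwalk_nonneg (n : ℕ) (x y : Zd d) : 0 ≤ pwalk d n x y := by
  unfold pwalk
  positivity

lemma sum_pwalk_le_one (n : ℕ) (x : Zd d) (T : Finset (Zd d)) :
    ∑ y ∈ T, pwalk d n x y ≤ 1 := by
  simp only [pwalk, walksIn_univ_eq_pathCount, ← sum_div]
  refine div_le_one_of_le₀ ?_ (by positivity)
  rw [← sum_image (f := fun v => (pathCount d n v : ℝ)) fun _ _ _ _ h => sub_left_injective h]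
  exact_mod_cast sum_pathCount_le n _

lemma pwalk_sq_mul_le (hd : 0 < d) (n : ℕ) (x y : Zd d) :
    pwalk d n x y ^ 2 * ((n : ℝ) + 1) ^ d ≤ (2 * d : ℝ) ^ (2 * d) := by
  have hpos : (0 : ℝ) < (2 * d) ^ (2 * n) := by positivity
  rw [pwalk, walksIn_univ_eq_pathCount, div_pow, ← pow_mul, mul_comm n 2, div_mul_eq_mul_div,
    div_le_iff₀ hpos]
  exact pathCount_sq_mul_le hd n (y - x)

lemma pwalk_le (hd : 0 < d) (n : ℕ) (x y : Zd d) :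
    pwalk d n x y ≤ (2 * d : ℝ) ^ d * ((n : ℝ) + 1) ^ (-((d : ℝ) / 2)) := by
  have hn : (0 : ℝ) < (n : ℝ) + 1 := by positivity
  set q := ((n : ℝ) + 1) ^ ((d : ℝ) / 2)
  have hq : 0 < q := by positivity
  have hq2 : q ^ 2 = ((n : ℝ) + 1) ^ d := by
    rw [← Real.rpow_natCast q, ← Real.rpow_mul hn.le, ← Real.rpow_natCast]
    norm_num
  have h : (pwalk d n x y * q) ^ 2 ≤ ((2 * d : ℝ) ^ d) ^ 2 := by
    rw [mul_pow, hq2, ← pow_mul, mul_comm d 2]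
    exact pwalk_sq_mul_le hd n x y
  rw [Real.rpow_neg hn.le, ← div_eq_mul_inv, le_div_iff₀ hq]
  exact le_of_pow_le_pow_left₀ two_ne_zero (by positivity) h

lemma summable_pwalk (hd : 3 ≤ d) (x y : Zd d) : Summable fun n => pwalk d n x y := by
  refine Summable.of_nonneg_of_le (fun n => pwalk_nonneg n x y)
    (fun n => pwalk_le (by omega) n x y) ((summable_add_one_rpow_neg ?_).mul_left _)
  have : (3 : ℝ) ≤ d := by exact_mod_cast hd
  linarith

lemma card_rwBox (x : Zd d) (r : ℕ) : #(rwBox d x r) = (2 * r + 1) ^ d := by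
  rw [rwBox, Pi.card_Icc]
  have h : ∀ i, (x i + r + 1 - (x i - r)).toNat = 2 * r + 1 := fun i => by omega
  simp only [Int.card_Icc, h, prod_const, card_univ, Fintype.card_fin]

lemma sum_pwalk_le_of_subset_rwBox (hd : 0 < d) (n : ℕ) (x : Zd d) {r : ℕ}
    {T : Finset (Zd d)} (hT : T ⊆ rwBox d x r) :
    ∑ y ∈ T, pwalk d n x y ≤
      (2 * r + 1) ^ d * (2 * d : ℝ) ^ d * ((n : ℝ) + 1) ^ (-((d : ℝ) / 2)) := by
  calc ∑ y ∈ T, pwalk d n x y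
      ≤ ∑ _y ∈ rwBox d x r, (2 * d : ℝ) ^ d * ((n : ℝ) + 1) ^ (-((d : ℝ) / 2)) :=
        sum_le_sum_of_subset_of_nonneg hT (fun y _ _ => pwalk_nonneg n x y) |>.trans
          (sum_le_sum fun y _ => pwalk_le hd n x y)
    _ = _ := by
        rw [sum_const, card_rwBox, nsmul_eq_mul]
        push_cast
        ring

theorem sum_green_le_of_subset_rwBox (hd : 3 ≤ d) (x : Zd d) (r : ℕ) {T : Finset (Zd d)}
    (hT : T ⊆ rwBox d x r) :
    ∑ y ∈ T, green d x y ≤ (1 + 2 * (2 * d : ℝ) ^ d) * (2 * r + 1) ^ 2 := by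
  have hd3 : (3 : ℝ) ≤ d := by exact_mod_cast hd
  have hs : 1 < (d : ℝ) / 2 := by linarith
  set t : ℝ := 2 * r + 1
  have ht : 0 < t := by positivity
  set N := (2 * r + 1) ^ 2
  have hN : (N : ℝ) = t ^ 2 := by simp [N, t]
  set B : ℝ := t ^ d * (2 * d : ℝ) ^ d
  set a : ℕ → ℝ := fun n => ∑ y ∈ T, pwalk d n x y
  have ha : Summable a := summable_sum fun y _ => summable_pwalk hd x y
  have htail : Summable fun n : ℕ => B * ((n : ℝ) + N + 1) ^ (-((d : ℝ) / 2)) := by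
    have h := (summable_nat_add_iff N).2 (summable_add_one_rpow_neg hs)
    exact (h.congr fun n => by push_cast; ring_nf).mul_left B
  have hhead : ∑ n ∈ range N, a n ≤ t ^ 2 := by
    calc ∑ n ∈ range N, a n ≤ ∑ _n ∈ range N, (1 : ℝ) :=
          sum_le_sum fun n _ => sum_pwalk_le_one n x T
      _ = t ^ 2 := by simp [hN]
  have hBN : B * (N : ℝ) ^ (1 - (d : ℝ) / 2) = (2 * d : ℝ) ^ d * t ^ 2 := by
    have hpow : (t ^ 2) ^ (1 - (d : ℝ) / 2) = t ^ ((2 : ℝ) - d) := by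
      rw [← Real.rpow_natCast t 2, ← Real.rpow_mul ht.le]
      ring_nf
    have hcancel : t ^ d * t ^ ((2 : ℝ) - d) = t ^ 2 := by
      rw [← Real.rpow_natCast t d, ← Real.rpow_add ht]
      norm_num
    rw [hN, hpow]
    linear_combination (2 * d : ℝ) ^ d * hcancel
  simp only [green]
  rw [← (Summable.tsum_finsetSum fun y _ => summable_pwalk hd x y), ← ha.sum_add_tsum_nat_add N]
  calc ∑ n ∈ range N, a n + ∑' n, a (n + N)
      ≤ t ^ 2 + ∑' n : ℕ, B * ((n : ℝ) + N + 1) ^ (-((d : ℝ) / 2)) := by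
        refine add_le_add hhead
          (Summable.tsum_le_tsum (fun n => ?_) ((summable_nat_add_iff N).2 ha) htail)
        have := sum_pwalk_le_of_subset_rwBox (by omega) (n + N) x hT
        push_cast at this
        simpa [B, t, add_assoc] using this
    _ ≤ t ^ 2 + B * ((N : ℝ) ^ (1 - (d : ℝ) / 2) / ((d : ℝ) / 2 - 1)) := by
        rw [tsum_mul_left]
        gcongr
        exact tsum_add_rpow_neg_le hs (by positivity)
    _ ≤ t ^ 2 + (2 * d : ℝ) ^ d * t ^ 2 * 2 := by
        rw [← mul_div_assoc, hBN]
        gcongr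
        rw [div_le_iff₀ (by linarith)]
        nlinarith [show (0 : ℝ) < (2 * d : ℝ) ^ d * t ^ 2 by positivity]
    _ = (1 + 2 * (2 * d : ℝ) ^ d) * t ^ 2 := by ring

lemma natAbs_le_normInf (v : Zd d) (j : Fin d) : (v j).natAbs ≤ normInf d v :=
  Finset.le_sup (f := fun i => (v i).natAbs) (Finset.mem_univ j)

lemma mem_rwBox_of_normInf_sub_le {x y z₀ : Zd d} {R : ℕ} (hx : normInf d (x - z₀) ≤ R)
    (hy : normInf d (y - z₀) ≤ R) : y ∈ rwBox d x (2 * R) := by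
  refine Finset.mem_Icc.2 ⟨fun j => ?_, fun j => ?_⟩ <;>
  · have hxj := (natAbs_le_normInf (x - z₀) j).trans hx
    have hyj := (natAbs_le_normInf (y - z₀) j).trans hy
    simp only [Pi.sub_apply] at hxj hyj
    push_cast
    omega

end SimpleRandomWalk

open SimpleRandomWalk in
theorem green_sum_over_boxes_general (d : ℕ) (hd : 3 ≤ d) (K : ℕ)
    (C : ℝ) (hC : 0 < C) :
    ∃ C' : ℝ, 0 < C' ∧
      ∀ (L : ℕ), 1 ≤ L → ∀ (m : ℕ), 1 ≤ m → ∀ (z : Fin m → Zd d) (z₀ : Zd d),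
        (∀ i j, (L : ℤ) ∣ z i j) →
        (Pairwise fun i j => (2 * K + 1) * L ≤ normInf d (z i - z j)) →
        (∀ i, ∀ x ∈ boxC d (z i) L, (normInf d (x - z₀) : ℝ) ≤ ⌊C * (m : ℝ) ^ (1 / (d : ℝ)) * L⌋₊) →
        ∀ x ∈ Finset.univ.biUnion fun i => boxC d (z i) L,
          ∑ y ∈ Finset.univ.biUnion fun i => boxC d (z i) L, green d x y ≤
            C' * (m : ℝ) ^ (2 / (d : ℝ)) * (L : ℝ) ^ 2 := by
  refine ⟨(1 + 2 * (2 * d : ℝ) ^ d) * (4 * C + 1) ^ 2, by positivity, ?_⟩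
  intro L hL m hm z z₀ _ _ hbox x hx
  set R := ⌊C * (m : ℝ) ^ (1 / (d : ℝ)) * L⌋₊
  have hnear :
      ∀ y ∈ Finset.univ.biUnion fun i => boxC d (z i) L, normInf d (y - z₀) ≤ R := by
    intro y hy
    obtain ⟨i, -, hyi⟩ := Finset.mem_biUnion.1 hy
    exact_mod_cast hbox i y hyi
  refine (sum_green_le_of_subset_rwBox hd x (2 * R)
    fun y hy => mem_rwBox_of_normInf_sub_le (hnear x hx) (hnear y hy)).trans ?_
  have hscale : 1 ≤ (m : ℝ) ^ (1 / (d : ℝ)) * L :=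
    one_le_mul_of_one_le_of_one_le (Real.one_le_rpow (by exact_mod_cast hm) (by positivity))
      (by exact_mod_cast hL)
  have hR : (R : ℝ) ≤ C * (m : ℝ) ^ (1 / (d : ℝ)) * L := Nat.floor_le (by positivity)
  have hm2 : (m : ℝ) ^ (2 / (d : ℝ)) = ((m : ℝ) ^ (1 / (d : ℝ))) ^ 2 := by
    rw [← Real.rpow_natCast, ← Real.rpow_mul (by positivity)]
    ring_nf
  calc (1 + 2 * (2 * d : ℝ) ^ d) * (2 * ((2 * R : ℕ) : ℝ) + 1) ^ 2
      ≤ (1 + 2 * (2 * d : ℝ) ^ d) * ((4 * C + 1) * ((m : ℝ) ^ (1 / (d : ℝ)) * L)) ^ 2 := by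
        gcongr
        push_cast
        nlinarith
    _ = _ := by rw [hm2]; ring

/-- if `z₁, …, z_m ∈ L·ℤ^d` have mutual ℓ∞-distance at least `(2K+1)L` and all
boxes `C_{zᵢ}` lie in a box of ℓ∞-radius `⌊C m^{1/d} L⌋` around some `z₀`, then for every
`x ∈ U = ∪ᵢ C_{zᵢ}` one has `∑_{y∈U} g(x,y) ≤ C' · m^{2/d} · L²`, with `C' = C'(d,K,C)`. -/
theorem green_sum_over_boxes (d : ℕ) (hd : 3 ≤ d) (K : ℕ) (hK : 100 ≤ K)
    (C : ℝ) (hC : 0 < C) :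
    ∃ C' : ℝ, 0 < C' ∧
      ∀ (L : ℕ), 1 ≤ L → ∀ (m : ℕ), 1 ≤ m → ∀ (z : Fin m → Zd d) (z₀ : Zd d),
        (∀ i j, (L : ℤ) ∣ z i j) →
        (Pairwise fun i j => (2 * K + 1) * L ≤ normInf d (z i - z j)) →
        (∀ i, ∀ x ∈ boxC d (z i) L, (normInf d (x - z₀) : ℝ) ≤ ⌊C * (m : ℝ) ^ (1 / (d : ℝ)) * L⌋₊) →
        ∀ x ∈ Finset.univ.biUnion fun i => boxC d (z i) L,
          ∑ y ∈ Finset.univ.biUnion fun i => boxC d (z i) L, green d x y ≤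
            C' * (m : ℝ) ^ (2 / (d : ℝ)) * (L : ℝ) ^ 2 :=
  green_sum_over_boxes_general d hd K C hC
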